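/- For every λ ∈ P_I^− one has v(λ) ∈ W^I and λ̃ = λ − v(λ)^{-1}ρ(k) satisfies (λ̃, α) ≤ 0 for all α ∈ R_I^+; moreover the map P_I^− → 𝔞*, λ ↦ λ̃, is injective. -/

import Mathlib

/-!
Common setting: a finite crystallographic root system `R` with Weyl group `W` in a
Euclidean space `V` (we identify `𝔞*` with `𝔞 = V` via the inner product), a fixed set
of positive roots `Rpos`, simple roots `Pi`, fundamental weights `fw`, the weight
lattice `P`, dominant weights `Pplus`, and for a subset `I ⊆ Pi` of the simple roots the
parabolic subgroup `W_I`, its positive roots `R_I^+`, `P_I^+`, the set `W^I` of minimal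
coset representatives, lengths, the Bruhat order, the orderings `⪯`, `≤_∅`, `≤_I`, the
group algebra `ℂ[P]`, the orbit sums `m_I(λ)`, the compact torus `A` (encoded abstractly
through its normalized Haar measure and its orthonormal multiplicative characters
`e^λ = ev λ`, `λ ∈ P`), the weight function `δ_k` and the inner product `(·,·)_k`.
-/

open scoped RealInnerProductSpace BigOperators Classical
open MeasureTheory

noncomputable section

variable {V : Type*} [NormedAddCommGroup V] [InnerProductSpace ℝ V] [FiniteDimensional ℝ V]

/-- A finite crystallographic root system in `V`, with a choice of positive roots,
the corresponding simple roots, and the fundamental weights. -/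
structure RootData (V : Type*) [NormedAddCommGroup V] [InnerProductSpace ℝ V] where
  R : Finset V
  Rpos : Finset V
  Pi : Finset V
  fw : V → V
  nonzero : ∀ α ∈ R, α ≠ 0
  reflect_mem : ∀ α ∈ R, ∀ β ∈ R, β - (2 * ⟪β, α⟫ / ⟪α, α⟫) • α ∈ R
  crystallographic : ∀ α ∈ R, ∀ β ∈ R, ∃ n : ℤ, 2 * ⟪β, α⟫ / ⟪α, α⟫ = (n : ℝ)
  pos_subset : Rpos ⊆ R
  pos_or_neg : ∀ α ∈ R, (α ∈ Rpos ↔ ¬ -α ∈ Rpos)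
  simple_subset : Pi ⊆ Rpos
  pos_comb : ∀ α ∈ Rpos, ∃ c : V → ℝ, (∀ β, 0 ≤ c β) ∧ α = ∑ β ∈ Pi, c β • β
  span_R : Submodule.span ℝ (R : Set V) = ⊤
  fw_prop : ∀ α ∈ Pi, ∀ β ∈ Pi, ⟪fw α, (2 / ⟪β, β⟫) • β⟫ = (if α = β then 1 else 0)

/-- The orthogonal reflection `s_α` in the hyperplane orthogonal to `α`. -/
def rRefl (α : V) : V ≃ₗᵢ[ℝ] V := Submodule.reflection (ℝ ∙ α)ᗮ

/-- The reflection group generated by the reflections in the elements of `S`. -/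
def weylGen (S : Finset V) : Subgroup (V ≃ₗᵢ[ℝ] V) :=
  Subgroup.closure { w | ∃ α ∈ S, w = rRefl α }

namespace RootData

variable (D : RootData V)

/-- The Weyl group `W`, generated by the simple reflections. -/
def Weyl : Subgroup (V ≃ₗᵢ[ℝ] V) := Subgroup.closure { w | ∃ α ∈ D.Pi, w = rRefl α }

/-- The parabolic subgroup `W_I` generated by the simple reflections from `I ⊆ Π`. -/
abbrev WeylP (_D : RootData V) (I : Finset V) : Subgroup (V ≃ₗᵢ[ℝ] V) := weylGen I

/-- `R_I^+ = R_I ∩ R^+`, the positive roots of the parabolic subsystem. -/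
def RposI (I : Finset V) : Set V :=
  { α : V | α ∈ D.Rpos ∧ α ∈ Submodule.span ℝ (I : Set V) }

/-- `W^I = {v ∈ W ∣ v(R_I^+) ⊆ R^+}`, the minimal coset representatives of `W/W_I`. -/
def WsetI (I : Finset V) : Set (V ≃ₗᵢ[ℝ] V) :=
  { v | v ∈ D.Weyl ∧ ∀ α ∈ D.RposI I, v α ∈ D.Rpos }

/-- The weight lattice `P = {λ ∣ (λ, α^∨) ∈ ℤ for all α ∈ R}`. -/
def P : Set V := { lam : V | ∀ α ∈ D.R, ∃ n : ℤ, 2 * ⟪lam, α⟫ / ⟪α, α⟫ = (n : ℝ) }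

/-- The dominant weights `P^+`. -/
def Pplus : Set V := { lam ∈ D.P | ∀ α ∈ D.Rpos, 0 ≤ ⟪lam, α⟫ }

/-- `P^- = -P^+`. -/
def Pminus : Set V := { lam ∈ D.P | ∀ α ∈ D.Rpos, ⟪lam, α⟫ ≤ 0 }

/-- `P_I^+ = {λ ∈ P ∣ (λ,α) ≥ 0 for all α ∈ R_I^+}`. -/
def PplusI (I : Finset V) : Set V := { lam ∈ D.P | ∀ α ∈ D.RposI I, 0 ≤ ⟪lam, α⟫ }

/-- `P_I^- = -P_I^+`. -/
def PminusI (I : Finset V) : Set V := { lam ∈ D.P | ∀ α ∈ D.RposI I, ⟪lam, α⟫ ≤ 0 }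

/-- The Steinberg weight `λ_v = Σ_{α ∈ Π, v⁻¹α < 0} ϖ_α`. -/
def steinberg (v : V ≃ₗᵢ[ℝ] V) : V :=
  ∑ α ∈ D.Pi.filter (fun α => v⁻¹ α ∉ D.Rpos), D.fw α

/-- The length of `w` : the minimal length of a word in the simple reflections
expressing `w`. -/
def len (w : V ≃ₗᵢ[ℝ] V) : ℕ :=
  sInf { n | ∃ l : List (V ≃ₗᵢ[ℝ] V),
    (∀ g ∈ l, ∃ α ∈ D.Pi, g = rRefl α) ∧ l.prod = w ∧ l.length = n }

/-- The Bruhat order on `W` (subword property): `u ≤ w` iff some reduced word for `w`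
has a subword which is a word for `u`. -/
def bruhatLE (u w : V ≃ₗᵢ[ℝ] V) : Prop :=
  ∃ l : List (V ≃ₗᵢ[ℝ] V),
    (∀ g ∈ l, ∃ α ∈ D.Pi, g = rRefl α) ∧ l.prod = w ∧ l.length = D.len w ∧
    ∃ l' : List (V ≃ₗᵢ[ℝ] V), l'.Sublist l ∧ l'.prod = u

def Dominant (lam : V) : Prop := ∀ α ∈ D.Rpos, 0 ≤ ⟪lam, α⟫

def AntiDominant (lam : V) : Prop := ∀ α ∈ D.Rpos, ⟪lam, α⟫ ≤ 0

def DominantI (I : Finset V) (lam : V) : Prop := ∀ α ∈ D.RposI I, 0 ≤ ⟪lam, α⟫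

/-- `w = v̄(λ)`, the shortest element of `W` with `w λ₊ = λ` (where `λ₊ = w⁻¹λ` is the
dominant representative of `W·λ`). -/
def IsVbar (lam : V) (w : V ≃ₗᵢ[ℝ] V) : Prop :=
  w ∈ D.Weyl ∧ D.Dominant (w⁻¹ lam) ∧
    ∀ u ∈ D.Weyl, D.Dominant (u⁻¹ lam) → D.len w ≤ D.len u

/-- `w = v(λ)`, the shortest element of `W` with `w λ = λ₋` antidominant. -/
def IsVmin (lam : V) (w : V ≃ₗᵢ[ℝ] V) : Prop :=
  w ∈ D.Weyl ∧ D.AntiDominant (w lam) ∧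
    ∀ u ∈ D.Weyl, D.AntiDominant (u lam) → D.len w ≤ D.len u

/-- `w = v̄_I(λ)`, the shortest element of `W_I` with `w λ_{I,+} = λ`. -/
def IsVbarI (I : Finset V) (lam : V) (w : V ≃ₗᵢ[ℝ] V) : Prop :=
  w ∈ D.WeylP I ∧ D.DominantI I (w⁻¹ lam) ∧
    ∀ u ∈ D.WeylP I, D.DominantI I (u⁻¹ lam) → D.len w ≤ D.len u

/-- `λ ⪯ μ` iff `μ - λ ∈ Q^+`. -/
def preceq (lam mu : V) : Prop :=
  ∃ c : V → ℕ, mu - lam = ∑ α ∈ D.Pi, (c α : ℝ) • α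

/-- The ordering `λ ≤_∅ μ` of Heckman: `λ₊ ≺ μ₊`, or `λ₊ = μ₊` and `v̄(λ) ≤ v̄(μ)` in the
Bruhat order. -/
def leEmpty (lam mu : V) : Prop :=
  ∃ lamP muP : V, lamP ∈ D.Pplus ∧ muP ∈ D.Pplus ∧
    (∃ w ∈ D.Weyl, w lamP = lam) ∧ (∃ w ∈ D.Weyl, w muP = mu) ∧
    ((D.preceq lamP muP ∧ lamP ≠ muP) ∨
      (lamP = muP ∧ ∃ vl vm : V ≃ₗᵢ[ℝ] V,
        D.IsVbar lam vl ∧ D.IsVbar mu vm ∧ D.bruhatLE vl vm))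

def ltEmpty (lam mu : V) : Prop := D.leEmpty lam mu ∧ lam ≠ mu

/-- `≤_I`, the restriction of `≤_∅` to `P_I^+`. -/
def leI (I : Finset V) (lam mu : V) : Prop :=
  lam ∈ D.PplusI I ∧ mu ∈ D.PplusI I ∧ D.leEmpty lam mu

def ltI (I : Finset V) (lam mu : V) : Prop := D.leI I lam mu ∧ lam ≠ mu

/-- `ρ(k) = ½ Σ_{α ∈ R^+} k_α α`. -/
def rho (k : V → ℝ) : V := (1/2 : ℝ) • ∑ α ∈ D.Rpos, k α • α

end RootData

/-- The action of `w ∈ W` on `ℂ[P] ⊆ ℂ[V]`, `e^λ ↦ e^{wλ}`. -/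
def wAct (w : V ≃ₗᵢ[ℝ] V) (f : AddMonoidAlgebra ℂ V) : AddMonoidAlgebra ℂ V :=
  AddMonoidAlgebra.ofCoeff (Finsupp.mapDomain ⇑w f.coeff)

/-- `e^λ ∈ ℂ[V]`. -/
def expw (lam : V) : AddMonoidAlgebra ℂ V := AddMonoidAlgebra.ofCoeff (Finsupp.single lam 1)

namespace RootData

variable (D : RootData V)

/-- The orbit `W_I · λ`. -/
def orbitI (I : Finset V) (lam : V) : Set V := { x | ∃ w ∈ D.WeylP I, w lam = x }

/-- `m_I(λ) = Σ_{μ ∈ W_I·λ} e^μ`. -/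
def mI (I : Finset V) (lam : V) : AddMonoidAlgebra ℂ V :=
  ∑ᶠ mu ∈ D.orbitI I lam, expw mu

/-- `ℂ[P]^H`: the `H`-invariant elements of the group algebra `ℂ[P]` (realized inside
`ℂ[V]` as the elements supported on the weight lattice `P`). -/
def invSet (H : Subgroup (V ≃ₗᵢ[ℝ] V)) : Set (AddMonoidAlgebra ℂ V) :=
  { f | (∀ x ∈ f.coeff.support, x ∈ D.P) ∧ ∀ w ∈ H, wAct w f = f }

end RootData

/-- The compact torus `A = i𝔞/(2πiQ^∨)`, encoded through an abstract probability space
together with the system of characters `ev λ = e^λ : A → ℂ`, `λ ∈ P`; the characters are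
multiplicative in `λ`, unimodular, and orthonormal with respect to the (normalized Haar)
measure `μ`.  This data determines the joint distribution of the characters and hence
all the integrals below agree with those over the actual torus. -/
structure TorusData (D : RootData V) (A : Type*) [MeasurableSpace A]
    (μ : Measure A) where
  ev : V → A → ℂ
  ev_add : ∀ lam ∈ D.P, ∀ mu ∈ D.P, ∀ t, ev (lam + mu) t = ev lam t * ev mu t
  ev_norm : ∀ lam ∈ D.P, ∀ t, ‖ev lam t‖ = 1
  ev_meas : ∀ lam ∈ D.P, Measurable (ev lam)
  ev_orth : ∀ lam ∈ D.P, ∀ mu ∈ D.P,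
    (∫ t, (starRingEnd ℂ) (ev lam t) * ev mu t ∂μ) = if lam = mu then 1 else 0

namespace TorusData

variable {D : RootData V} {A : Type*} [MeasurableSpace A] {μ : Measure A}

/-- Evaluation of a Laurent polynomial `f ∈ ℂ[P]` as a function on the torus. -/
def evalF (T : TorusData D A μ) (f : AddMonoidAlgebra ℂ V) (t : A) : ℂ :=
  Finsupp.sum f.coeff fun lam c => c * T.ev lam t

/-- The weight function `δ_k = ∏_{α∈R}(e^{α/2} - e^{-α/2})^{k_α}
= ∏_{α∈R^+} |e^α - 1|^{2k_α}` on `A` (the two expressions agree since `k` is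
`W`-invariant and `|e^{α/2}-e^{-α/2}|² = |e^α - 1|²` as `|e^{α/2}| = 1`). -/
def deltaK (T : TorusData D A μ) (k : V → ℝ) (t : A) : ℝ :=
  ∏ α ∈ D.Rpos, ‖T.ev α t - 1‖ ^ (2 * k α)

/-- The inner product `(φ,ψ)_k = ∫_A conj(φ(t)) ψ(t) δ_k(t) dt` on `ℂ[P]`. -/
def ipk (T : TorusData D A μ) (k : V → ℝ) (f g : AddMonoidAlgebra ℂ V) : ℂ :=
  ∫ t, (starRingEnd ℂ) (T.evalF f t) * T.evalF g t * ((T.deltaK k t : ℝ) : ℂ) ∂μ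

/-- The defining property of the nonsymmetric Jacobi polynomial `E(λ,k)`:
`E = e^λ + Σ_{μ <_∅ λ} c_μ e^μ` and `(E, e^μ)_k = 0` for all `μ <_∅ λ`. -/
def IsNonsymJacobi (T : TorusData D A μ) (k : V → ℝ) (lam : V)
    (E : AddMonoidAlgebra ℂ V) : Prop :=
  (∃ c : V →₀ ℂ, c lam = 1 ∧
      (∀ mu ∈ c.support, mu ∈ D.P ∧ (mu = lam ∨ D.ltEmpty mu lam)) ∧
      E = Finsupp.sum c fun mu a => a • expw mu) ∧
  ∀ mu ∈ D.P, D.ltEmpty mu lam → T.ipk k E (expw mu) = 0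

/-- The defining property of the Jacobi polynomial `p_I(λ,k)`:
`p ∈ ℂ[P]^{W_I}`, `p = m_I(λ) + Σ_{μ <_I λ} c_μ m_I(μ)`, and `(p, m_I(μ))_k = 0` for
all `μ <_I λ`. -/
def IsJacobiI (T : TorusData D A μ) (I : Finset V) (k : V → ℝ) (lam : V)
    (p : AddMonoidAlgebra ℂ V) : Prop :=
  p ∈ D.invSet (D.WeylP I) ∧
  (∃ c : V →₀ ℂ, c lam = 1 ∧
      (∀ mu ∈ c.support, mu ∈ D.PplusI I ∧ (mu = lam ∨ D.ltI I mu lam)) ∧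
      p = Finsupp.sum c fun mu a => a • D.mI I mu) ∧
  ∀ mu ∈ D.PplusI I, D.ltI I mu lam → T.ipk k p (D.mI I mu) = 0

end TorusData

end

/-!
The antidominant representative `v(λ)λ` of a Weyl orbit minimises the pairing with the dominant
weight `ρ(k)` over the orbit. This is proved by induction on the length, peeling off a simple
reflection `s_γ` on the right of a reduced word, which moves the pairing in the right direction
because the rest of the word keeps `γ` positive. Expanding `‖λ - λ'‖²` for `λ̃ = λ̃'` into four
such pairings gives injectivity. For `v(λ) ∈ W^I`, minimality of the length of `v(λ)` forces
`v(λ)γ > 0` for every simple `γ ∈ I` (if `(λ, γ) = 0`, then `v(λ)s_γ` is shorter and also works),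
and a positive root of `R_I` is a nonnegative combination of `I`.
-/

variable {V : Type*} [NormedAddCommGroup V] [InnerProductSpace ℝ V]

theorem rRefl_apply (α x : V) : rRefl α x = x - (2 * ⟪x, α⟫ / ⟪α, α⟫) • α := by
  rw [rRefl, Submodule.reflection_orthogonal_apply, Submodule.reflection_singleton_apply,
    real_inner_self_eq_norm_sq, real_inner_comm, neg_sub]
  module

theorem rRefl_self (α : V) : rRefl α α = -α :=
  Submodule.reflection_orthogonalComplement_singleton_eq_neg α

theorem rRefl_rRefl (α x : V) : rRefl α (rRefl α x) = x :=
  Submodule.reflection_reflection _ x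

theorem rRefl_mul_self (α : V) : rRefl α * rRefl α = 1 :=
  Submodule.reflection_mul_reflection _

theorem rRefl_inv (α : V) : (rRefl α)⁻¹ = rRefl α :=
  Submodule.reflection_inv

theorem rRefl_smul {c : ℝ} (hc : c ≠ 0) (α : V) : rRefl (c • α) = rRefl α := by
  simp only [rRefl, Submodule.span_singleton_smul_eq (IsUnit.mk0 c hc)]

theorem inner_inv_apply_left (w : V ≃ₗᵢ[ℝ] V) (x y : V) : ⟪w⁻¹ x, y⟫ = ⟪x, w y⟫ :=
  w.symm.inner_map_eq_flip x y

theorem mul_rRefl_mul_inv (w : V ≃ₗᵢ[ℝ] V) (α : V) : w * rRefl α * w⁻¹ = rRefl (w α) := by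
  ext x
  simp only [LinearIsometryEquiv.coe_mul, Function.comp_apply, rRefl_apply, map_sub, map_smul,
    LinearIsometryEquiv.coe_inv, LinearIsometryEquiv.apply_symm_apply, ← inner_inv_apply_left,
    LinearIsometryEquiv.inner_map_map]

namespace RootData

variable (D : RootData V)

theorem inner_self_pos_of_mem_R {α : V} (hα : α ∈ D.R) : 0 < ⟪α, α⟫ :=
  real_inner_self_pos.mpr (D.nonzero α hα)

theorem mem_R_of_mem_Pi {α : V} (hα : α ∈ D.Pi) : α ∈ D.R :=
  D.pos_subset (D.simple_subset hα)

theorem neg_mem_Rpos_of_notMem {α : V} (hα : α ∈ D.R) (h : α ∉ D.Rpos) : -α ∈ D.Rpos := by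
  by_contra hn
  exact h ((D.pos_or_neg α hα).2 hn)

theorem rRefl_mem_R {γ α : V} (hγ : γ ∈ D.R) (hα : α ∈ D.R) : rRefl γ α ∈ D.R := by
  rw [rRefl_apply]
  exact D.reflect_mem γ hγ α hα

theorem rRefl_mem_Weyl {γ : V} (hγ : γ ∈ D.Pi) : rRefl γ ∈ D.Weyl :=
  Subgroup.subset_closure ⟨γ, hγ, rfl⟩

theorem apply_mem_R {w : V ≃ₗᵢ[ℝ] V} (hw : w ∈ D.Weyl) {α : V} (hα : α ∈ D.R) : w α ∈ D.R := by
  induction hw using Subgroup.closure_induction_left generalizing α with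
  | one => exact hα
  | mul_left _ hs _ _ ih =>
    obtain ⟨γ, hγ, rfl⟩ := hs
    exact D.rRefl_mem_R (D.mem_R_of_mem_Pi hγ) (ih hα)
  | inv_mul_cancel _ hs _ _ ih =>
    obtain ⟨γ, hγ, rfl⟩ := hs
    rw [rRefl_inv]
    exact D.rRefl_mem_R (D.mem_R_of_mem_Pi hγ) (ih hα)

theorem inner_fw_of_mem_Pi {γ β : V} (hγ : γ ∈ D.Pi) (hβ : β ∈ D.Pi) :
    ⟪D.fw γ, β⟫ = if γ = β then ⟪β, β⟫ / 2 else 0 := by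
  have h := D.fw_prop γ hγ β hβ
  have hβ0 := (D.inner_self_pos_of_mem_R (D.mem_R_of_mem_Pi hβ)).ne'
  rw [real_inner_smul_right] at h
  split_ifs at h ⊢
  · field_simp at h
    linarith
  · exact (mul_eq_zero.mp h).resolve_left (div_ne_zero two_ne_zero hβ0)

theorem inner_fw_sum {γ : V} (hγ : γ ∈ D.Pi) (c : V → ℝ) :
    ⟪D.fw γ, ∑ β ∈ D.Pi, c β • β⟫ = c γ * (⟪γ, γ⟫ / 2) := by
  rw [inner_sum, Finset.sum_eq_single_of_mem γ hγ]
  · rw [real_inner_smul_right, D.inner_fw_of_mem_Pi hγ hγ, if_pos rfl]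
  · intro β hβ hne
    rw [real_inner_smul_right, D.inner_fw_of_mem_Pi hγ hβ, if_neg (Ne.symm hne), mul_zero]

theorem inner_fw_nonneg {γ β : V} (hγ : γ ∈ D.Pi) (hβ : β ∈ D.Rpos) : 0 ≤ ⟪D.fw γ, β⟫ := by
  obtain ⟨c, hc, rfl⟩ := D.pos_comb β hβ
  rw [D.inner_fw_sum hγ]
  exact mul_nonneg (hc γ) (by linarith [D.inner_self_pos_of_mem_R (D.mem_R_of_mem_Pi hγ)])

/-- A weighted height, `∑ c_γ γ ↦ ∑ c_γ ‖γ‖² / 2`, positive exactly on the positive roots. -/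
noncomputable def height : V →ₗ[ℝ] ℝ := innerₛₗ ℝ (∑ γ ∈ D.Pi, D.fw γ)

theorem height_apply (x : V) : D.height x = ∑ γ ∈ D.Pi, ⟪D.fw γ, x⟫ :=
  sum_inner _ _ _

theorem height_pos {β : V} (hβ : β ∈ D.Rpos) : 0 < D.height β := by
  obtain ⟨c, hc, hcβ⟩ := D.pos_comb β hβ
  have hterm : ∀ γ ∈ D.Pi, 0 ≤ c γ * (⟪γ, γ⟫ / 2) := fun γ hγ =>
    mul_nonneg (hc γ) (by linarith [D.inner_self_pos_of_mem_R (D.mem_R_of_mem_Pi hγ)])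
  have hheight : D.height β = ∑ γ ∈ D.Pi, c γ * (⟪γ, γ⟫ / 2) :=
    (D.height_apply β).trans (Finset.sum_congr rfl fun γ hγ => by rw [hcβ, D.inner_fw_sum hγ])
  refine hheight ▸ (Finset.sum_nonneg hterm).lt_of_ne fun h0 => D.nonzero β (D.pos_subset hβ) ?_
  rw [hcβ]
  refine Finset.sum_eq_zero fun γ hγ => ?_
  have hγ0 := (half_pos (D.inner_self_pos_of_mem_R (D.mem_R_of_mem_Pi hγ))).ne'
  have hcγ := (Finset.sum_eq_zero_iff_of_nonneg hterm).mp h0.symm γ hγ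
  rw [(mul_eq_zero.mp hcγ).resolve_right hγ0, zero_smul]

theorem mem_Rpos_of_height_nonneg {β : V} (hβ : β ∈ D.R) (h : 0 ≤ D.height β) : β ∈ D.Rpos := by
  by_contra hn
  have := D.height_pos (D.neg_mem_Rpos_of_notMem hβ hn)
  rw [map_neg] at this
  linarith

theorem pos_of_smul_mem_Rpos {γ : V} (hγ : γ ∈ D.Pi) {c : ℝ} (hc : c • γ ∈ D.Rpos) : 0 < c :=
  pos_of_mul_pos_left (by simpa using D.height_pos hc)
    (D.height_pos (D.simple_subset hγ)).le

theorem rRefl_mem_Rpos {γ β : V} (hγ : γ ∈ D.Pi) (hβ : β ∈ D.Rpos)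
    (hne : ∀ c : ℝ, β ≠ c • γ) : rRefl γ β ∈ D.Rpos := by
  obtain ⟨c, hc, hcβ⟩ := D.pos_comb β hβ
  obtain ⟨δ, hδ, hδγ, hcδ⟩ : ∃ δ ∈ D.Pi, δ ≠ γ ∧ c δ ≠ 0 := by
    by_contra! h
    refine hne (c γ) ?_
    rw [hcβ, Finset.sum_eq_single_of_mem γ hγ fun δ hδ hδγ => by rw [h δ hδ hδγ, zero_smul]]
  have hpos : 0 < ⟪D.fw δ, rRefl γ β⟫ := by
    rw [rRefl_apply, inner_sub_right, real_inner_smul_right, D.inner_fw_of_mem_Pi hδ hγ,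
      if_neg hδγ, mul_zero, sub_zero, hcβ, D.inner_fw_sum hδ]
    exact mul_pos ((hc δ).lt_of_ne' hcδ)
      (by linarith [D.inner_self_pos_of_mem_R (D.mem_R_of_mem_Pi hδ)])
  by_contra hn
  have := D.inner_fw_nonneg hδ
    (D.neg_mem_Rpos_of_notMem (D.rRefl_mem_R (D.mem_R_of_mem_Pi hγ) (D.pos_subset hβ)) hn)
  rw [inner_neg_right] at this
  linarith

end RootData

namespace RootData

variable (D : RootData V)

def IsWord (l : List (V ≃ₗᵢ[ℝ] V)) : Prop := ∀ g ∈ l, ∃ α ∈ D.Pi, g = rRefl α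

variable {D}

theorem IsWord.prod_mem_Weyl {l : List (V ≃ₗᵢ[ℝ] V)} (hl : D.IsWord l) : l.prod ∈ D.Weyl :=
  Subgroup.list_prod_mem _ fun g hg => by
    obtain ⟨γ, hγ, rfl⟩ := hl g hg
    exact D.rRefl_mem_Weyl hγ

theorem IsWord.len_prod_le {l : List (V ≃ₗᵢ[ℝ] V)} (hl : D.IsWord l) :
    D.len l.prod ≤ l.length :=
  Nat.sInf_le ⟨l, hl, rfl, rfl⟩

theorem exists_isWord_prod_eq {w : V ≃ₗᵢ[ℝ] V} (hw : w ∈ D.Weyl) :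
    ∃ l, D.IsWord l ∧ l.prod = w := by
  induction hw using Subgroup.closure_induction_left with
  | one => exact ⟨[], List.forall_mem_nil _, rfl⟩
  | mul_left s hs _ _ ih =>
    obtain ⟨l, hl, rfl⟩ := ih
    exact ⟨s :: l, List.forall_mem_cons.2 ⟨hs, hl⟩, List.prod_cons⟩
  | inv_mul_cancel s hs _ _ ih =>
    obtain ⟨γ, hγ, rfl⟩ := hs
    obtain ⟨l, hl, rfl⟩ := ih
    refine ⟨rRefl γ :: l, List.forall_mem_cons.2 ⟨⟨γ, hγ, rfl⟩, hl⟩, ?_⟩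
    rw [rRefl_inv, List.prod_cons]

theorem exists_reduced_word {w : V ≃ₗᵢ[ℝ] V} (hw : w ∈ D.Weyl) :
    ∃ l, D.IsWord l ∧ l.prod = w ∧ l.length = D.len w := by
  obtain ⟨l, hl, rfl⟩ := exists_isWord_prod_eq hw
  have hne : {n | ∃ l' : List (V ≃ₗᵢ[ℝ] V),
      D.IsWord l' ∧ l'.prod = l.prod ∧ l'.length = n}.Nonempty := ⟨l.length, l, hl, rfl, rfl⟩
  exact Nat.sInf_mem hne

/-- The exchange property. -/
theorem IsWord.exists_isWord_mul_rRefl {l : List (V ≃ₗᵢ[ℝ] V)} (hl : D.IsWord l) {α : V}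
    (hα : α ∈ D.Rpos) (h : l.prod α ∉ D.Rpos) :
    ∃ l', D.IsWord l' ∧ l'.prod = l.prod * rRefl α ∧ l'.length + 1 = l.length := by
  induction l with
  | nil => exact absurd hα h
  | cons s t ih =>
    obtain ⟨γ, hγ, rfl⟩ := hl s List.mem_cons_self
    have ht : D.IsWord t := fun g hg => hl g (List.mem_cons_of_mem _ hg)
    by_cases htα : t.prod α ∈ D.Rpos
    · obtain ⟨c, hc⟩ : ∃ c : ℝ, t.prod α = c • γ := by
        by_contra! hne
        exact h (D.rRefl_mem_Rpos hγ htα hne)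
      have hc0 : c ≠ 0 := (D.pos_of_smul_mem_Rpos hγ (hc ▸ htα)).ne'
      have hcomm : t.prod * rRefl α = rRefl γ * t.prod := mul_inv_eq_iff_eq_mul.mp <| by
        rw [mul_rRefl_mul_inv, hc, rRefl_smul hc0]
      refine ⟨t, ht, ?_, rfl⟩
      rw [List.prod_cons, mul_assoc, hcomm, ← mul_assoc, rRefl_mul_self, one_mul]
    · obtain ⟨t', ht', hprod, hlen⟩ := ih ht htα
      refine ⟨rRefl γ :: t', List.forall_mem_cons.2 ⟨⟨γ, hγ, rfl⟩, ht'⟩, ?_, ?_⟩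
      · rw [List.prod_cons, List.prod_cons, hprod, mul_assoc]
      · simp [← hlen]

theorem len_mul_rRefl_lt {w : V ≃ₗᵢ[ℝ] V} (hw : w ∈ D.Weyl) {α : V} (hα : α ∈ D.Rpos)
    (h : w α ∉ D.Rpos) : D.len (w * rRefl α) < D.len w := by
  obtain ⟨l, hl, rfl, hlen⟩ := exists_reduced_word hw
  obtain ⟨l', hl', hprod, hlen'⟩ := hl.exists_isWord_mul_rRefl hα h
  have := hl'.len_prod_le
  rw [hprod] at this
  omega

theorem exists_eq_mul_rRefl {w : V ≃ₗᵢ[ℝ] V} (hw : w ∈ D.Weyl) (hw1 : w ≠ 1) :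
    ∃ u ∈ D.Weyl, ∃ γ ∈ D.Pi, w = u * rRefl γ ∧ u γ ∈ D.Rpos ∧ D.len u < D.len w := by
  obtain ⟨l, hl, rfl, hlen⟩ := exists_reduced_word hw
  obtain ⟨l', s, rfl⟩ := l.eq_nil_or_concat'.resolve_left (by rintro rfl; exact hw1 rfl)
  obtain ⟨γ, hγ, rfl⟩ := hl s (by simp)
  have hl' : D.IsWord l' := fun g hg => hl g (List.mem_append_left _ hg)
  have hprod : (l' ++ [rRefl γ]).prod = l'.prod * rRefl γ := by simp
  have hlt : D.len l'.prod < D.len (l'.prod * rRefl γ) := by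
    have := hl'.len_prod_le
    rw [← hprod, ← hlen, List.length_append, List.length_singleton]
    omega
  refine ⟨l'.prod, hl'.prod_mem_Weyl, γ, hγ, hprod, ?_, hprod ▸ hlt⟩
  by_contra hn
  have := len_mul_rRefl_lt hl'.prod_mem_Weyl (D.simple_subset hγ) hn
  omega

end RootData

namespace RootData

variable {D : RootData V}

theorem inner_le_inner_apply_of_antiDominant {ρ x : V} (hρ : D.Dominant ρ)
    (hx : D.AntiDominant x) {w : V ≃ₗᵢ[ℝ] V} (hw : w ∈ D.Weyl) : ⟪ρ, x⟫ ≤ ⟪ρ, w x⟫ := by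
  induction hlen : D.len w using Nat.strong_induction_on generalizing w with
  | _ n ih =>
    rcases eq_or_ne w 1 with rfl | hw1
    · exact le_rfl
    obtain ⟨u, hu, γ, hγ, rfl, huγ, hlt⟩ := exists_eq_mul_rRefl hw hw1
    have hγγ := D.inner_self_pos_of_mem_R (D.mem_R_of_mem_Pi hγ)
    have hstep : ⟪ρ, (u * rRefl γ) x⟫ = ⟪ρ, u x⟫ - 2 * ⟪x, γ⟫ / ⟪γ, γ⟫ * ⟪ρ, u γ⟫ := by
      rw [LinearIsometryEquiv.coe_mul, Function.comp_apply, rRefl_apply, map_sub, map_smul,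
        inner_sub_right, real_inner_smul_right]
    have hcoeff : 2 * ⟪x, γ⟫ / ⟪γ, γ⟫ ≤ 0 :=
      div_nonpos_of_nonpos_of_nonneg (by linarith [hx γ (D.simple_subset hγ)]) hγγ.le
    rw [hstep]
    nlinarith [ih _ (hlen ▸ hlt) hu rfl, hρ _ huγ]

theorem eq_of_sub_inv_apply_eq {ρ lam lam' : V} {w w' : V ≃ₗᵢ[ℝ] V} (hρ : D.Dominant ρ)
    (hw : w ∈ D.Weyl) (hw' : w' ∈ D.Weyl) (hlam : D.AntiDominant (w lam))
    (hlam' : D.AntiDominant (w' lam')) (h : lam - w⁻¹ ρ = lam' - w'⁻¹ ρ) : lam = lam' := by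
  have h₁ : ⟪ρ, w lam⟫ ≤ ⟪ρ, w' lam⟫ := by
    simpa using inner_le_inner_apply_of_antiDominant hρ hlam (mul_mem hw' (inv_mem hw))
  have h₂ : ⟪ρ, w' lam'⟫ ≤ ⟪ρ, w lam'⟫ := by
    simpa using inner_le_inner_apply_of_antiDominant hρ hlam' (mul_mem hw (inv_mem hw'))
  have hdiff : lam - lam' = w⁻¹ ρ - w'⁻¹ ρ := sub_eq_sub_iff_sub_eq_sub.mp h
  rw [← sub_eq_zero, ← real_inner_self_nonpos]
  calc ⟪lam - lam', lam - lam'⟫ = ⟪w⁻¹ ρ - w'⁻¹ ρ, lam - lam'⟫ := by rw [← hdiff]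
    _ = (⟪ρ, w lam⟫ - ⟪ρ, w' lam⟫) + (⟪ρ, w' lam'⟫ - ⟪ρ, w lam'⟫) := by
      simp only [inner_sub_left, inner_sub_right, inner_inv_apply_left]
      ring
    _ ≤ 0 := by linarith

theorem inner_rho_nonneg_of_mem_Pi {k : V → ℝ} (hk0 : ∀ α ∈ D.R, 0 ≤ k α)
    (hkW : ∀ w ∈ D.Weyl, ∀ α ∈ D.R, k (w α) = k α) {γ : V} (hγ : γ ∈ D.Pi) :
    0 ≤ ⟪D.rho k, γ⟫ := by
  let f : V → ℝ := fun β => k β * ⟪β, γ⟫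
  let B := D.Rpos.filter fun β => ∀ c : ℝ, β ≠ c • γ
  have hmaps : ∀ β ∈ B, rRefl γ β ∈ B := by
    intro β hβ
    obtain ⟨hβ, hne⟩ := Finset.mem_filter.mp hβ
    refine Finset.mem_filter.mpr ⟨D.rRefl_mem_Rpos hγ hβ hne, fun c hc => hne (-c) ?_⟩
    rw [← rRefl_rRefl γ β, hc, map_smul, rRefl_self, smul_neg, neg_smul]
  have hsign : ∀ β ∈ B, f β = -f (rRefl γ β) := by
    intro β hβ
    have hβR := D.pos_subset (Finset.mem_filter.mp hβ).1
    have hinner : ⟪rRefl γ β, γ⟫ = -⟪β, γ⟫ := by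
      rw [← (rRefl γ).inner_map_map (rRefl γ β) γ, rRefl_rRefl, rRefl_self, inner_neg_right]
    simp only [f, hkW _ (D.rRefl_mem_Weyl hγ) β hβR, hinner, mul_neg, neg_neg]
  have hB : ∑ β ∈ B, f β = 0 := by
    have := Finset.sum_nbij' (g := fun β => -f β) (rRefl γ) (rRefl γ) hmaps hmaps
      (fun β _ => rRefl_rRefl γ β) (fun β _ => rRefl_rRefl γ β) hsign
    rw [Finset.sum_neg_distrib] at this
    linarith
  have hA : 0 ≤ ∑ β ∈ D.Rpos.filter (fun β => ¬∀ c : ℝ, β ≠ c • γ), f β := by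
    refine Finset.sum_nonneg fun β hβ => ?_
    obtain ⟨hβ, hne⟩ := Finset.mem_filter.mp hβ
    simp only [not_forall, not_not] at hne
    obtain ⟨c, rfl⟩ := hne
    simp only [f, real_inner_smul_left]
    exact mul_nonneg (hk0 _ (D.pos_subset hβ)) (mul_nonneg (D.pos_of_smul_mem_Rpos hγ hβ).le
      (D.inner_self_pos_of_mem_R (D.mem_R_of_mem_Pi hγ)).le)
  have hrho : ⟪D.rho k, γ⟫ = 1 / 2 * ∑ β ∈ D.Rpos, f β := by
    simp only [rho, real_inner_smul_left, sum_inner, f]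
  rw [hrho, ← Finset.sum_filter_add_sum_filter_not D.Rpos (fun β => ∀ c : ℝ, β ≠ c • γ)]
  linarith

theorem rho_dominant {k : V → ℝ} (hk0 : ∀ α ∈ D.R, 0 ≤ k α)
    (hkW : ∀ w ∈ D.Weyl, ∀ α ∈ D.R, k (w α) = k α) : D.Dominant (D.rho k) := by
  intro β hβ
  obtain ⟨c, hc, rfl⟩ := D.pos_comb β hβ
  rw [inner_sum]
  refine Finset.sum_nonneg fun γ hγ => ?_
  rw [real_inner_smul_right]
  exact mul_nonneg (hc γ) (inner_rho_nonneg_of_mem_Pi hk0 hkW hγ)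

theorem inner_fw_eq_zero_of_mem_span {I : Finset V} (hI : I ⊆ D.Pi) {δ : V} (hδ : δ ∈ D.Pi)
    (hδI : δ ∉ I) {x : V} (hx : x ∈ Submodule.span ℝ (I : Set V)) : ⟪D.fw δ, x⟫ = 0 := by
  have hle : Submodule.span ℝ (I : Set V) ≤ (ℝ ∙ D.fw δ)ᗮ := Submodule.span_le.mpr fun β hβ =>
    Submodule.mem_orthogonal_singleton_iff_inner_right.mpr <| by
      rw [D.inner_fw_of_mem_Pi hδ (hI hβ), if_neg (by rintro rfl; exact hδI hβ)]
  exact Submodule.mem_orthogonal_singleton_iff_inner_right.mp (hle hx)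

theorem apply_mem_Rpos_of_mem_RposI {I : Finset V} (hI : I ⊆ D.Pi) {w : V ≃ₗᵢ[ℝ] V}
    (hw : w ∈ D.Weyl) (hwI : ∀ γ ∈ I, w γ ∈ D.Rpos) {α : V} (hα : α ∈ D.RposI I) :
    w α ∈ D.Rpos := by
  obtain ⟨hαpos, hαspan⟩ := hα
  obtain ⟨c, hc, hcα⟩ := D.pos_comb α hαpos
  refine D.mem_Rpos_of_height_nonneg (D.apply_mem_R hw (D.pos_subset hαpos)) ?_
  rw [hcα, map_sum, map_sum]
  refine Finset.sum_nonneg fun β hβ => ?_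
  rw [map_smul, map_smul, smul_eq_mul]
  by_cases hβI : β ∈ I
  · exact mul_nonneg (hc β) (D.height_pos (hwI β hβI)).le
  · have h0 : c β * (⟪β, β⟫ / 2) = 0 := by
      rw [← D.inner_fw_sum hβ, ← hcα]
      exact inner_fw_eq_zero_of_mem_span hI hβ hβI hαspan
    rw [(mul_eq_zero.mp h0).resolve_right
      (half_pos (D.inner_self_pos_of_mem_R (D.mem_R_of_mem_Pi hβ))).ne', zero_mul]

theorem IsVmin.apply_mem_Rpos {lam : V} {w : V ≃ₗᵢ[ℝ] V} (hw : D.IsVmin lam w) {γ : V}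
    (hγ : γ ∈ D.Pi) (hlam : ⟪lam, γ⟫ ≤ 0) : w γ ∈ D.Rpos := by
  obtain ⟨hwW, hwlam, hmin⟩ := hw
  by_contra hn
  rcases hlam.lt_or_eq with hlt | heq
  · have := hwlam _ (D.neg_mem_Rpos_of_notMem (D.apply_mem_R hwW (D.mem_R_of_mem_Pi hγ)) hn)
    rw [inner_neg_right, w.inner_map_map] at this
    linarith
  · have hfix : (w * rRefl γ) lam = w lam := by
      rw [LinearIsometryEquiv.coe_mul, Function.comp_apply, rRefl_apply, heq]
      simp
    have := hmin _ (mul_mem hwW (D.rRefl_mem_Weyl hγ)) (hfix ▸ hwlam)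
    have := len_mul_rRefl_lt hwW (D.simple_subset hγ) hn
    omega

theorem IsVmin.mem_WsetI {I : Finset V} (hI : I ⊆ D.Pi) {lam : V} {w : V ≃ₗᵢ[ℝ] V}
    (hw : D.IsVmin lam w) (hlam : ∀ α ∈ D.RposI I, ⟪lam, α⟫ ≤ 0) : w ∈ D.WsetI I :=
  ⟨hw.1, fun _ => apply_mem_Rpos_of_mem_RposI hI hw.1 fun γ hγ =>
    hw.apply_mem_Rpos (hI hγ) (hlam γ ⟨D.simple_subset (hI hγ), Submodule.subset_span hγ⟩)⟩

end RootData

variable [FiniteDimensional ℝ V]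

/-- For every `λ ∈ P_I^−` one has `v(λ) ∈ W^I`, and
`λ̃ = λ − v(λ)⁻¹ρ(k)` satisfies `(λ̃, α) ≤ 0` for all `α ∈ R_I^+`; moreover the map
`P_I^− → 𝔞*`, `λ ↦ λ̃`, is injective. -/
theorem statement_12 (D : RootData V) (I : Finset V) (hI : I ⊆ D.Pi)
    (k : V → ℝ) (hk0 : ∀ α ∈ D.R, 0 ≤ k α)
    (hkW : ∀ w ∈ D.Weyl, ∀ α ∈ D.R, k (w α) = k α) :
    (∀ lam ∈ D.PminusI I, ∀ w : V ≃ₗᵢ[ℝ] V, D.IsVmin lam w →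
      w ∈ D.WsetI I ∧ ∀ α ∈ D.RposI I, ⟪lam - w⁻¹ (D.rho k), α⟫ ≤ 0) ∧
    ∀ lam ∈ D.PminusI I, ∀ lam' ∈ D.PminusI I, ∀ w w' : V ≃ₗᵢ[ℝ] V,
      D.IsVmin lam w → D.IsVmin lam' w' →
      lam - w⁻¹ (D.rho k) = lam' - w'⁻¹ (D.rho k) → lam = lam' := by
  have hρ := RootData.rho_dominant hk0 hkW
  refine ⟨fun lam hlam w hw => ?_, fun lam _ lam' _ w w' hw hw' h => ?_⟩
  · have hwI := hw.mem_WsetI hI hlam.2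
    refine ⟨hwI, fun α hα => ?_⟩
    rw [inner_sub_left, inner_inv_apply_left]
    linarith [hlam.2 α hα, hρ _ (hwI.2 α hα)]
  · exact RootData.eq_of_sub_inv_apply_eq hρ hw.1 hw'.1 hw.2.1 hw'.2.1 h
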